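/- The average vector field method u^{k+1} = u^k + h Ω̄ ∫₀¹ ∇H((1−ξ)u^k + ξu^{k+1}) dξ with Ω̄ skew-symmetric preserves H exactly: H(u^{k+1}) = H(u^k). -/

import Mathlib

/-!
Along the segment `ξ ↦ (1 - ξ) u + ξ v` the fundamental theorem of calculus gives
`H v - H u = ⟪v - u, ḡ⟫`, where `ḡ = ∫₀¹ ∇H((1 - ξ) u + ξ v) dξ` is the averaged gradient.
For an AVF step, `v - u = h Ω ḡ`, and `⟪Ω ḡ, ḡ⟫ = 0` by skew-symmetry.
-/

open RealInnerProductSpace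

section AveragedGradient

variable {E : Type*} [NormedAddCommGroup E] [InnerProductSpace ℝ E] [CompleteSpace E]
  {H : E → ℝ}

noncomputable def avgGradient (H : E → ℝ) (a b : E) : E :=
  ∫ ξ in (0 : ℝ)..1, gradient H ((1 - ξ) • a + ξ • b)

theorem ContDiff.continuous_gradient (hH : ContDiff ℝ 1 H) : Continuous (gradient H) :=
  (InnerProductSpace.toDual ℝ E).symm.continuous.comp (hH.continuous_fderiv one_ne_zero)

theorem DifferentiableAt.hasDerivAt_comp_lineMap {a b : E} {t : ℝ}
    (hH : DifferentiableAt ℝ H (AffineMap.lineMap a b t)) :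
    HasDerivAt (fun ξ => H (AffineMap.lineMap a b ξ))
      ⟪b - a, gradient H (AffineMap.lineMap a b t)⟫ t :=
  (hH.hasGradientAt.hasFDerivAt.comp_hasDerivAt t AffineMap.hasDerivAt_lineMap).congr_deriv
    (by simp)

theorem ContDiff.sub_eq_integral_inner_gradient_lineMap (hH : ContDiff ℝ 1 H) (a b : E) :
    H b - H a = ∫ ξ in (0 : ℝ)..1, ⟪b - a, gradient H (AffineMap.lineMap a b ξ)⟫ := by
  have hcont : Continuous fun ξ : ℝ => ⟪b - a, gradient H (AffineMap.lineMap a b ξ)⟫ :=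
    continuous_const.inner (hH.continuous_gradient.comp AffineMap.lineMap_continuous)
  rw [intervalIntegral.integral_eq_sub_of_hasDerivAt
    (fun t _ => ((hH.differentiable one_ne_zero).differentiableAt).hasDerivAt_comp_lineMap)
    (hcont.intervalIntegrable 0 1)]
  simp

theorem ContDiff.sub_eq_inner_avgGradient (hH : ContDiff ℝ 1 H) (a b : E) :
    H b - H a = ⟪b - a, avgGradient H a b⟫ := by
  have hint :
      IntervalIntegrable (fun ξ => gradient H (AffineMap.lineMap a b ξ)) MeasureTheory.volume 0 1 :=
    (hH.continuous_gradient.comp AffineMap.lineMap_continuous).intervalIntegrable 0 1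
  calc H b - H a = ∫ ξ in (0 : ℝ)..1, innerSL ℝ (b - a) (gradient H (AffineMap.lineMap a b ξ)) :=
        hH.sub_eq_integral_inner_gradient_lineMap a b
    _ = innerSL ℝ (b - a) (∫ ξ in (0 : ℝ)..1, gradient H (AffineMap.lineMap a b ξ)) :=
        (innerSL ℝ (b - a)).intervalIntegral_comp_comm hint
    _ = ⟪b - a, avgGradient H a b⟫ := by
        simp only [innerSL_apply_apply, avgGradient, AffineMap.lineMap_apply_module]

end AveragedGradient

theorem AVF_method_preserves_energy_general
    {n : ℕ} (H : EuclideanSpace ℝ (Fin n) → ℝ) (hH : ContDiff ℝ 1 H)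
    (Ω : EuclideanSpace ℝ (Fin n) →ₗ[ℝ] EuclideanSpace ℝ (Fin n))
    (hskew : ∀ x, ⟪x, Ω x⟫ = 0)
    (h : ℝ) (uk uk1 : EuclideanSpace ℝ (Fin n))
    (hstep : uk1 = uk + h • Ω (∫ ξ in (0:ℝ)..1, gradient H ((1 - ξ) • uk + ξ • uk1))) :
    H uk1 = H uk := by
  have hincrement : uk1 - uk = h • Ω (avgGradient H uk uk1) := sub_eq_iff_eq_add'.mpr hstep
  rw [← sub_eq_zero, hH.sub_eq_inner_avgGradient, hincrement, real_inner_smul_left,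
    real_inner_comm, hskew, mul_zero]

/-- The average vector field method
`u^{k+1} = u^k + h Ω̄ ∫₀¹ ∇H((1−ξ)u^k + ξu^{k+1}) dξ`
with `Ω̄` skew-symmetric preserves `H` exactly: `H(u^{k+1}) = H(u^k)`. -/
theorem AVF_method_preserves_energy
    {n : ℕ} (H : EuclideanSpace ℝ (Fin n) → ℝ) (hH : ContDiff ℝ 1 H)
    (Ω : EuclideanSpace ℝ (Fin n) →ₗ[ℝ] EuclideanSpace ℝ (Fin n))
    (hskew : ∀ x, ⟪x, Ω x⟫ = 0)
    (h : ℝ) (hh : 0 < h) (uk uk1 : EuclideanSpace ℝ (Fin n))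
    (hstep : uk1 = uk + h • Ω (∫ ξ in (0:ℝ)..1, gradient H ((1 - ξ) • uk + ξ • uk1))) :
    H uk1 = H uk :=
  AVF_method_preserves_energy_general H hH Ω hskew h uk uk1 hstep
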